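/- For every i ≥ 1, every word y with at least i occurrences of `true`, and every word x: ⟨a_{p,i} x | y⟩ = ⟨x | a_{p,i}* y⟩, where the left side is 0 if x has fewer than i occurrences of `true`. That is, deleting the i-th pawn is adjoint to doubling the i-th pawn. -/

import Mathlib

/-- A single pawn move: a pawn (`true`) advances one square rightward into an
empty square (`false`). -/
def PawnMove (w₀ w₁ : List Bool) : Prop :=
  ∃ u v : List Bool, w₀ = u ++ [true, false] ++ v ∧ w₁ = u ++ [false, true] ++ v

/-- Reachability: the reflexive-transitive closure of the single-move relation. -/
def Reach : List Bool → List Bool → Prop :=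
  Relation.ReflTransGen PawnMove

/-- The `ZMod 2` pairing `⟨w₀|w₁⟩`: `1` if `w₁` is reachable from `w₀`, else `0`. -/
noncomputable def pairing (w₀ w₁ : List Bool) : ZMod 2 :=
  open Classical in if Reach w₀ w₁ then 1 else 0

/-- Pairing extended to `Option`: any pairing in which one argument is `0`
(i.e. `none`) equals `0`. -/
noncomputable def pairingO : Option (List Bool) → Option (List Bool) → ZMod 2
  | some x, some y => pairing x y
  | none, _ => 0
  | _, none => 0

/-- `delOcc b i w` deletes the `i`-th occurrence (counted from the left,
starting at `1`) of `b` in `w`; it is `none` (i.e. `0`) if `w` has fewer than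
`i` occurrences of `b`. -/
def delOcc (b : Bool) : ℕ → List Bool → Option (List Bool)
  | _, [] => none
  | i, a :: w =>
    if a = b then
      if i = 1 then some w
      else Option.map (List.cons a) (delOcc b (i - 1) w)
    else Option.map (List.cons a) (delOcc b i w)

/-- `dblOcc b i w` doubles the `i`-th occurrence (counted from the left,
starting at `1`) of `b` in `w`, i.e. inserts an additional `b` immediately
before it; it is `none` (i.e. `0`) if `w` has fewer than `i` occurrences of
`b`. -/
def dblOcc (b : Bool) : ℕ → List Bool → Option (List Bool)
  | _, [] => none
  | i, a :: w =>
    if a = b then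
      if i = 1 then some (b :: a :: w)
      else Option.map (List.cons a) (dblOcc b (i - 1) w)
    else Option.map (List.cons a) (dblOcc b i w)

/-!
Record for each pawn the number of empty squares to its left. A move raises one entry of this
profile by one, and conversely `w₁` is reachable from `w₀` exactly when both words have the same
length and the profile of `w₀` is entrywise below that of `w₁`. Deleting the `i`-th pawn erases
the `i`-th entry of the profile and doubling it repeats that entry; since profiles are
nondecreasing, `A` minus its `i`-th entry lies below `B` iff `A` lies below `B` with its `i`-th
entry repeated, which is the adjunction.
-/

theorem List.Forall₂.trans {α : Type*} {R : α → α → Prop} [IsTrans α R] :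
    ∀ {l₁ l₂ l₃ : List α}, Forall₂ R l₁ l₂ → Forall₂ R l₂ l₃ → Forall₂ R l₁ l₃
  | [], [], [], .nil, .nil => .nil
  | _ :: _, _ :: _, _ :: _, .cons h₁ t₁, .cons h₂ t₂ => .cons (_root_.trans h₁ h₂) (t₁.trans t₂)

theorem List.forall₂_le_map_add_right_iff (c : ℕ) {l₁ l₂ : List ℕ} :
    Forall₂ (· ≤ ·) (l₁.map (· + c)) (l₂.map (· + c)) ↔ Forall₂ (· ≤ ·) l₁ l₂ := by
  simp [forall₂_map_left_iff, forall₂_map_right_iff]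

/-- The `k`-th entry is the number of empty squares to the left of the `k`-th pawn. -/
def pawnProfile : List Bool → List ℕ
  | [] => []
  | true :: w => 0 :: pawnProfile w
  | false :: w => (pawnProfile w).map (· + 1)

theorem length_pawnProfile : ∀ w : List Bool, (pawnProfile w).length = w.count true
  | [] => rfl
  | true :: w => by simp [pawnProfile, length_pawnProfile w]
  | false :: w => by simp [pawnProfile, length_pawnProfile w]

theorem isChain_pawnProfile : ∀ w : List Bool, (pawnProfile w).IsChain (· ≤ ·)
  | [] => .nil
  | true :: w => List.isChain_cons.2 ⟨fun _ _ => Nat.zero_le _, isChain_pawnProfile w⟩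
  | false :: w => List.isChain_map_of_isChain (· + 1) (fun _ _ h => Nat.add_le_add_right h 1)
      (isChain_pawnProfile w)

theorem PawnMove.pawnProfile_le {w₀ w₁ : List Bool} (h : PawnMove w₀ w₁) :
    List.Forall₂ (· ≤ ·) (pawnProfile w₀) (pawnProfile w₁) := by
  obtain ⟨u, v, rfl, rfl⟩ := h
  induction u with
  | nil => simp [pawnProfile]
  | cons a u ih =>
    cases a
    · exact (List.forall₂_le_map_add_right_iff 1).2 ih
    · exact .cons le_rfl ih

theorem PawnMove.length_eq {w₀ w₁ : List Bool} (h : PawnMove w₀ w₁) :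
    w₀.length = w₁.length := by
  obtain ⟨u, v, rfl, rfl⟩ := h
  simp

theorem Reach.length_eq {w₀ w₁ : List Bool} (h : Reach w₀ w₁) : w₀.length = w₁.length := by
  induction h with
  | refl => rfl
  | tail _ hmove ih => exact ih.trans hmove.length_eq

theorem Reach.pawnProfile_le {w₀ w₁ : List Bool} (h : Reach w₀ w₁) :
    List.Forall₂ (· ≤ ·) (pawnProfile w₀) (pawnProfile w₁) := by
  induction h with
  | refl => exact List.forall₂_refl _
  | tail _ hmove ih => exact ih.trans hmove.pawnProfile_le

theorem Reach.count_true_eq {w₀ w₁ : List Bool} (h : Reach w₀ w₁) :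
    w₀.count true = w₁.count true := by
  simpa only [length_pawnProfile] using h.pawnProfile_le.length_eq

theorem Reach.cons {w₀ w₁ : List Bool} (a : Bool) (h : Reach w₀ w₁) :
    Reach (a :: w₀) (a :: w₁) :=
  Relation.ReflTransGen.lift (a :: ·)
    (fun _ _ ⟨u, v, h₀, h₁⟩ => ⟨a :: u, v, by simp [h₀], by simp [h₁]⟩) _ _ h

/-- The leftmost pawn can be pushed into the first empty square by shifting the whole block
of pawns in front of that square one step to the right. -/
theorem exists_reach_true_cons_false_cons :
    ∀ w : List Bool, false ∈ w → ∃ s, Reach (true :: w) (false :: s) ∧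
      pawnProfile s = (pawnProfile (true :: w)).map (· - 1)
  | false :: w, _ =>
    ⟨true :: w, .single ⟨[], w, rfl, rfl⟩, by simp [pawnProfile, Function.comp_def]⟩
  | true :: w, hw => by
    obtain ⟨s, hreach, hs⟩ := exists_reach_true_cons_false_cons w (by simpa using hw)
    exact ⟨true :: s, (hreach.cons true).tail ⟨[], s, rfl, rfl⟩, by simp [pawnProfile, hs]⟩

theorem reach_of_pawnProfile_le : ∀ {w₀ w₁ : List Bool}, w₀.length = w₁.length →
    List.Forall₂ (· ≤ ·) (pawnProfile w₀) (pawnProfile w₁) → Reach w₀ w₁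
  | [], [], _, _ => .refl
  | false :: w₀, false :: w₁, hlen, hle =>
    (reach_of_pawnProfile_le (by simpa using hlen)
      ((List.forall₂_le_map_add_right_iff 1).1 hle)).cons false
  | true :: w₀, true :: w₁, hlen, hle =>
    (reach_of_pawnProfile_le (by simpa using hlen) (List.forall₂_cons.1 hle).2).cons true
  | false :: w₀, true :: w₁, _, hle => by
    cases hp : pawnProfile w₀ <;> simp [pawnProfile, hp] at hle
  | true :: w₀, false :: w₁, hlen, hle => by
    have hfalse : false ∈ w₀ := by
      by_contra hw₀
      have hall : (true :: w₀).count true = (true :: w₀).length :=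
        List.count_eq_length.2 fun b hb => by cases b <;> simp_all
      have hcount : (true :: w₀).count true = w₁.count true := by
        simpa [length_pawnProfile] using hle.length_eq
      have := List.count_le_length (a := true) (l := w₁)
      simp only [List.length_cons] at hall hlen
      omega
    obtain ⟨s, hreach, hs⟩ := exists_reach_true_cons_false_cons w₀ hfalse
    refine hreach.trans ((reach_of_pawnProfile_le ?_ ?_).cons false)
    · have := hreach.length_eq
      simp only [List.length_cons] at this hlen
      omega
    · simp only [hs, pawnProfile, List.forall₂_map_left_iff, List.forall₂_map_right_iff] at hle ⊢
      exact hle.imp fun _ _ _ => by omega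

theorem reach_iff (w₀ w₁ : List Bool) :
    Reach w₀ w₁ ↔ w₀.length = w₁.length ∧ List.Forall₂ (· ≤ ·) (pawnProfile w₀) (pawnProfile w₁) :=
  ⟨fun h => ⟨h.length_eq, h.pawnProfile_le⟩, fun ⟨hlen, hle⟩ => reach_of_pawnProfile_le hlen hle⟩

/-- `dupIdx j l` repeats the `j`-th entry (counted from `0`) of `l`. -/
def dupIdx {α : Type*} : ℕ → List α → List α
  | _, [] => []
  | 0, a :: l => a :: a :: l
  | j + 1, a :: l => a :: dupIdx j l

theorem length_dupIdx {α : Type*} : ∀ {j : ℕ} {l : List α}, j < l.length →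
    (dupIdx j l).length = l.length + 1
  | 0, _ :: _, _ => rfl
  | j + 1, _ :: l, hj => by simp [dupIdx, length_dupIdx (j := j) (l := l) (by simpa using hj)]

theorem dupIdx_map {α β : Type*} (f : α → β) : ∀ (j : ℕ) (l : List α),
    dupIdx j (l.map f) = (dupIdx j l).map f
  | _, [] => by cases ‹ℕ› <;> rfl
  | 0, _ :: _ => rfl
  | j + 1, _ :: l => by simp [dupIdx, dupIdx_map f j l]

/-- The repeated entry of `B` has to dominate both `A[j]` and `A[j+1]`; by monotonicity of `A`
the second suffices. -/
theorem forall₂_le_eraseIdx_iff_forall₂_le_dupIdx {α : Type*} [Preorder α] :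
    ∀ {j : ℕ} {A B : List α}, A.IsChain (· ≤ ·) → j < B.length →
      (List.Forall₂ (· ≤ ·) (A.eraseIdx j) B ↔ List.Forall₂ (· ≤ ·) A (dupIdx j B))
  | 0, [], _ :: _, _, _ => by simp [dupIdx]
  | 0, [_], _ :: _, _, _ => by simp [dupIdx]
  | 0, a :: a' :: A, b :: B, hA, _ => by
    simp only [List.eraseIdx_cons_zero, dupIdx, List.forall₂_cons (a := a)]
    exact ⟨fun h => ⟨(List.isChain_cons_cons.1 hA).1.trans (List.forall₂_cons.1 h).1, h⟩, And.right⟩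
  | j + 1, [], _ :: _, _, _ => by simp [dupIdx]
  | j + 1, a :: A, b :: B, hA, hj => by
    simp only [List.eraseIdx_cons_succ, dupIdx, List.forall₂_cons]
    rw [forall₂_le_eraseIdx_iff_forall₂_le_dupIdx (A := A) hA.tail (by simpa using hj)]

theorem delOcc_eq_none {b : Bool} : ∀ {i : ℕ} {w : List Bool}, w.count b < i → delOcc b i w = none
  | _, [], _ => rfl
  | i, a :: w, h => by
    by_cases ha : a = b
    · subst ha
      have : w.count a < i - 1 := by simp at h; omega
      simp [delOcc, delOcc_eq_none this, show i ≠ 1 by simp at h; omega]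
    · simp [delOcc, ha, delOcc_eq_none (i := i) (w := w) (by simpa [List.count_cons, ha] using h)]

theorem exists_delOcc_eq_some : ∀ {j : ℕ} {w : List Bool}, j < w.count true →
    ∃ w', delOcc true (j + 1) w = some w' ∧ w'.length + 1 = w.length ∧
      pawnProfile w' = (pawnProfile w).eraseIdx j
  | 0, true :: w, _ => ⟨w, by simp [delOcc], rfl, rfl⟩
  | j + 1, true :: w, h => by
    obtain ⟨w', hdel, hlen, hprof⟩ := exists_delOcc_eq_some (j := j) (w := w) (by simpa using h)
    exact ⟨true :: w', by simp [delOcc, hdel], by simp [hlen], by simp [pawnProfile, hprof]⟩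
  | j, false :: w, h => by
    obtain ⟨w', hdel, hlen, hprof⟩ := exists_delOcc_eq_some (j := j) (w := w) (by simpa using h)
    exact ⟨false :: w', by simp [delOcc, hdel], by simp [hlen],
      by simp [pawnProfile, hprof, List.eraseIdx_map]⟩

theorem exists_dblOcc_eq_some : ∀ {j : ℕ} {w : List Bool}, j < w.count true →
    ∃ w', dblOcc true (j + 1) w = some w' ∧ w'.length = w.length + 1 ∧
      pawnProfile w' = dupIdx j (pawnProfile w)
  | 0, true :: w, _ => ⟨true :: true :: w, by simp [dblOcc], rfl, rfl⟩
  | j + 1, true :: w, h => by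
    obtain ⟨w', hdbl, hlen, hprof⟩ := exists_dblOcc_eq_some (j := j) (w := w) (by simpa using h)
    exact ⟨true :: w', by simp [dblOcc, hdbl], by simp [hlen], by simp [pawnProfile, dupIdx, hprof]⟩
  | j, false :: w, h => by
    obtain ⟨w', hdbl, hlen, hprof⟩ := exists_dblOcc_eq_some (j := j) (w := w) (by simpa using h)
    exact ⟨false :: w', by simp [dblOcc, hdbl], by simp [hlen],
      by simp [pawnProfile, hprof, dupIdx_map]⟩

theorem del_dbl_pawn_adjoint (i : ℕ) (hi : 1 ≤ i) (y : List Bool)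
    (hy : i ≤ y.count true) (x : List Bool) :
    pairingO (delOcc true i x) (some y) = pairingO (some x) (dblOcc true i y) := by
  obtain ⟨j, rfl⟩ : ∃ j, i = j + 1 := ⟨i - 1, by omega⟩
  obtain ⟨y', hdbl, hy'len, hy'prof⟩ := exists_dblOcc_eq_some (j := j) (w := y) (by omega)
  have hy'count : y'.count true = y.count true + 1 := by
    rw [← length_pawnProfile, ← length_pawnProfile, hy'prof,
      length_dupIdx (by rw [length_pawnProfile]; omega)]
  rw [hdbl]
  rcases lt_or_ge j (x.count true) with hx | hx
  · obtain ⟨x', hdel, hx'len, hx'prof⟩ := exists_delOcc_eq_some hx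
    have hreach : Reach x' y ↔ Reach x y' := by
      rw [reach_iff, reach_iff, hx'prof, hy'prof, forall₂_le_eraseIdx_iff_forall₂_le_dupIdx
        (isChain_pawnProfile x) (by rw [length_pawnProfile]; omega)]
      exact and_congr_left fun _ => by omega
    simp only [hdel, pairingO, pairing]
    congr 1
    exact propext hreach
  · have hunreach : ¬ Reach x y' := fun h => by have := h.count_true_eq; omega
    simp [delOcc_eq_none (show x.count true < j + 1 by omega), pairingO, pairing, hunreach]
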